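/- Let X, Y be random variables on finite alphabets 𝒳, 𝒴 and β ∈ [0,1]. Then the infimum defining C_β(X;Y) is unchanged if it is restricted to auxiliary random variables U whose alphabet 𝒰 satisfies |𝒰| ≤ |𝒳|·|𝒴| + 1. That is, for every finite-alphabet U jointly distributed with (X,Y) with ρ_m(X;Y|U) ≤ β, there exists U' with |𝒰'| ≤ |𝒳|·|𝒴| + 1, ρ_m(X;Y|U') = ρ_m(X;Y|U), and I(X,Y;U') = I(X,Y;U). -/

import Mathlib

open scoped BigOperators Classical

noncomputable section

namespace GCI

/-- A bundled finite alphabet. -/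
structure FinAlph : Type 1 where
  carrier : Type
  [fin : Fintype carrier]

instance : CoeSort FinAlph Type := ⟨FinAlph.carrier⟩
instance (A : FinAlph) : Fintype A := A.fin

variable {Ω : Type} [Fintype Ω]

/-- `p` is a probability mass function on the finite sample space `Ω`. -/
def IsPMF (p : Ω → ℝ) : Prop := (∀ ω, 0 ≤ p ω) ∧ ∑ ω, p ω = 1

/-- Expectation of a real random variable `f` under the pmf `p`. -/
def expec (p : Ω → ℝ) (f : Ω → ℝ) : ℝ := ∑ ω, p ω * f ω

/-- Marginal pmf of the random variable `X` under `p`. -/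
def marg {𝒳 : Type} (p : Ω → ℝ) (X : Ω → 𝒳) (x : 𝒳) : ℝ :=
  ∑ ω, if X ω = x then p ω else 0

/-- Conditional expectation `E[f | U = u]`. -/
def cexp {𝒰 : Type} (p : Ω → ℝ) (U : Ω → 𝒰) (u : 𝒰) (f : Ω → ℝ) : ℝ :=
  (∑ ω, if U ω = u then p ω * f ω else 0) / marg p U u

/-- `E[cov(f, g | U)]`. -/
def ccov {𝒰 : Type} (p : Ω → ℝ) (U : Ω → 𝒰) (f g : Ω → ℝ) : ℝ :=
  expec p fun ω => (f ω - cexp p U (U ω) f) * (g ω - cexp p U (U ω) g)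

/-- `E[var(f | U)]`. -/
def cvar {𝒰 : Type} (p : Ω → ℝ) (U : Ω → 𝒰) (f : Ω → ℝ) : ℝ := ccov p U f f

/-- Conditional Pearson correlation `ρ(f; g | U)`. -/
def ccorr {𝒰 : Type} (p : Ω → ℝ) (U : Ω → 𝒰) (f g : Ω → ℝ) : ℝ :=
  if 0 < cvar p U f * cvar p U g then
    ccov p U f g / (Real.sqrt (cvar p U f) * Real.sqrt (cvar p U g))
  else 0

/-- Conditional correlation ratio `θ(X; Y | U)` for a real-valued `X`. -/
def cratio {𝒴 𝒰 : Type} (p : Ω → ℝ) (U : Ω → 𝒰) (X : Ω → ℝ) (Y : Ω → 𝒴) : ℝ :=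
  ⨆ g : 𝒴 × 𝒰 → ℝ, ccorr p U X fun ω => g (Y ω, U ω)

/-- Conditional maximal correlation `ρ_m(X; Y | U)`. -/
def maxCorr {𝒳 𝒴 𝒰 : Type} (p : Ω → ℝ) (U : Ω → 𝒰) (X : Ω → 𝒳) (Y : Ω → 𝒴) : ℝ :=
  ⨆ f : 𝒳 × 𝒰 → ℝ, ⨆ g : 𝒴 × 𝒰 → ℝ,
    ccorr p U (fun ω => f (X ω, U ω)) fun ω => g (Y ω, U ω)

/-- Unconditional Pearson correlation. -/
def corr0 (p : Ω → ℝ) (f g : Ω → ℝ) : ℝ := ccorr p (fun _ => ()) f g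

/-- Unconditional correlation ratio `θ(X;Y)`. -/
def ratio0 {𝒴 : Type} (p : Ω → ℝ) (X : Ω → ℝ) (Y : Ω → 𝒴) : ℝ :=
  cratio p (fun _ => ()) X Y

/-- Unconditional maximal correlation `ρ_m(X;Y)`. -/
def maxCorr0 {𝒳 𝒴 : Type} (p : Ω → ℝ) (X : Ω → 𝒳) (Y : Ω → 𝒴) : ℝ :=
  maxCorr p (fun _ => ()) X Y

/-- Shannon entropy (base 2) of the random variable `X` under `p`. -/
def ent {𝒳 : Type} [Fintype 𝒳] (p : Ω → ℝ) (X : Ω → 𝒳) : ℝ :=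
  ∑ x, -(marg p X x * Real.logb 2 (marg p X x))

/-- Conditional Shannon entropy `H(X | U)`. -/
def condEnt {𝒳 𝒰 : Type} [Fintype 𝒳] [Fintype 𝒰] (p : Ω → ℝ) (X : Ω → 𝒳) (U : Ω → 𝒰) : ℝ :=
  ent p (fun ω => (X ω, U ω)) - ent p U

/-- Mutual information `I(X; U)`. -/
def mutInfo {𝒳 𝒰 : Type} [Fintype 𝒳] [Fintype 𝒰] (p : Ω → ℝ) (X : Ω → 𝒳) (U : Ω → 𝒰) : ℝ :=
  ent p X + ent p U - ent p fun ω => (X ω, U ω)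

/-- Almost-sure equality of two discrete random variables. -/
def AEEq {𝒱 : Type} (p : Ω → ℝ) (f g : Ω → 𝒱) : Prop := ∀ ω, 0 < p ω → f ω = g ω

/-- The Gács–Körner common information `C_GK(X;Y)`. -/
def CGK {𝒳 𝒴 : Type} (p : Ω → ℝ) (X : Ω → 𝒳) (Y : Ω → 𝒴) : ℝ :=
  sSup { r | ∃ (𝒱 : FinAlph) (f : 𝒳 → 𝒱) (g : 𝒴 → 𝒱),
    AEEq p (fun ω => f (X ω)) (fun ω => g (Y ω)) ∧ r = ent p fun ω => f (X ω) }

/-- The conditional Gács–Körner common information `C_GK(X;Y|U)`. -/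
def CGKcond {𝒳 𝒴 𝒰 : Type} [Fintype 𝒰] (p : Ω → ℝ) (X : Ω → 𝒳) (Y : Ω → 𝒴)
    (U : Ω → 𝒰) : ℝ :=
  sSup { r | ∃ (𝒱 : FinAlph) (f : 𝒳 × 𝒰 → 𝒱) (g : 𝒴 × 𝒰 → 𝒱),
    AEEq p (fun ω => f (X ω, U ω)) (fun ω => g (Y ω, U ω)) ∧
    r = condEnt p (fun ω => f (X ω, U ω)) U }

/-- The `β`-approximate common information (approximate information-correlation function). -/
def Cbeta {𝒳 𝒴 : Type} [Fintype 𝒳] [Fintype 𝒴] (p : 𝒳 × 𝒴 → ℝ) (β : ℝ) : ℝ :=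
  sInf { r | ∃ (𝒰 : FinAlph) (q : (𝒳 × 𝒴) × 𝒰 → ℝ),
    IsPMF q ∧ (∀ a, marg q Prod.fst a = p a) ∧
    maxCorr q Prod.snd (fun a => a.1.1) (fun a => a.1.2) ≤ β ∧
    r = mutInfo q Prod.fst Prod.snd }

/-- The `n`-th term in the definition of the `β`-exact common information:
the normalized smallest entropy of an auxiliary variable for `n` i.i.d. copies. -/
def KbetaN {𝒳 𝒴 : Type} [Fintype 𝒳] [Fintype 𝒴] (p : 𝒳 × 𝒴 → ℝ) (β : ℝ) (n : ℕ) : ℝ :=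
  sInf { r | ∃ (𝒰 : FinAlph) (q : ((Fin n → 𝒳) × (Fin n → 𝒴)) × 𝒰 → ℝ),
    IsPMF q ∧
    (∀ a : (Fin n → 𝒳) × (Fin n → 𝒴), marg q Prod.fst a = ∏ i, p (a.1 i, a.2 i)) ∧
    maxCorr q Prod.snd (fun a => a.1.1) (fun a => a.1.2) ≤ β ∧
    r = (1 / (n : ℝ)) * ent q Prod.snd }

/-- The `β`-exact common information (exact information-correlation function). -/
def Kbeta {𝒳 𝒴 : Type} [Fintype 𝒳] [Fintype 𝒴] (p : 𝒳 × 𝒴 → ℝ) (β : ℝ) : ℝ :=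
  Filter.limUnder Filter.atTop fun n => KbetaN p β n


/-!
Write `w u` for the probability of `U = u` and `r u` for the law of `(X, Y)` given `U = u`.
Cauchy–Schwarz across the slices shows that `ρ_m(X; Y | U)` is the largest of the unconditional
maximal correlations of the `r u` with `w u ≠ 0`, and the chain rule gives
`I(X, Y; U) = H(X, Y) - ∑ u, w u * H(r u)`. Hence the law of `(X, Y)` and `I(X, Y; U)` only
depend on the point `∑ u, w u • (r u, H(r u))` of `ℝ^(𝒳 × 𝒴) × ℝ`, a space of dimension `|𝒳| |𝒴| + 1`.
Carathéodory's theorem for cones rewrites this point as a nonnegative combination of linearly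
independent vectors `(r u, H(r u))`, and the elimination can always keep a slice of maximal
correlation, which therefore survives in the new auxiliary variable.
-/

section ConicCaratheodory

open Finset Function

variable {E ι : Type*} [AddCommGroup E] [Module ℝ E] [Fintype ι] {y : ι → E} {L : E →ₗ[ℝ] ℝ}

lemma exists_pos_of_sum_mul_eq_zero {ν a : ι → ℝ} (h : ∑ i, ν i * a i = 0)
    (ha : ∀ i, ν i ≠ 0 → 0 < a i) (hν : ν ≠ 0) : ∃ j, 0 < ν j := by
  by_contra! hneg
  have hterm : ∀ i ∈ univ, ν i * a i ≤ 0 := fun i _ => by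
    by_cases hi : ν i = 0
    · simp [hi]
    · exact mul_nonpos_of_nonpos_of_nonneg (hneg i) (ha i hi).le
  refine hν (funext fun i => by_contra fun hi => ?_)
  have := (sum_eq_zero_iff_of_nonpos hterm).1 h i (mem_univ i)
  exact hi ((mul_eq_zero.1 this).resolve_right (ha i hi).ne')

lemma exists_signed_dependence {s : Set ι} (hL : ∀ i ∈ s, 0 < L (y i))
    (hdep : ¬ LinearIndepOn ℝ y s) (i0 : ι) :
    ∃ μ : ι → ℝ, support μ ⊆ s ∧ ∑ i, μ i • y i = 0 ∧ μ i0 ≤ 0 ∧ ∃ j, 0 < μ j := by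
  obtain ⟨l, hls, hl0, hl⟩ := linearDepOn_iff'.1 hdep
  have hsum : ∑ i, l i • y i = 0 := by
    rwa [Finsupp.linearCombination_apply, Finsupp.sum_fintype _ _ fun i => zero_smul ℝ (y i)] at hl0
  have hsupp : support l ⊆ s := fun i hi => hls (Finsupp.mem_support_iff.2 hi)
  have hpos : ∀ ν : ι → ℝ, support ν ⊆ s → ∑ i, ν i • y i = 0 → ν ≠ 0 → ∃ j, 0 < ν j :=
    fun ν hνs hν0 hν => exists_pos_of_sum_mul_eq_zero
      (by simpa using congrArg L hν0) (fun i hi => hL i (hνs hi)) hν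
  rcases le_or_gt (l i0) 0 with hi0 | hi0
  · exact ⟨l, hsupp, hsum, hi0, hpos l hsupp hsum (DFunLike.coe_injective.ne hl)⟩
  · have hsupp' : support (-⇑l) ⊆ s := by rwa [support_neg]
    have hsum' : ∑ i, (-⇑l) i • y i = 0 := by simp [neg_smul, hsum]
    refine ⟨-⇑l, hsupp', hsum', by simpa using hi0.le, hpos _ hsupp' hsum' ?_⟩
    simpa using DFunLike.coe_injective.ne hl

lemma exists_support_ssubset_of_not_linearIndepOn {c : ι → ℝ} (hc : ∀ i, 0 ≤ c i)
    (hL : ∀ i ∈ support c, 0 < L (y i)) {i0 : ι} (hi0 : 0 < c i0)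
    (hdep : ¬ LinearIndepOn ℝ y (support c)) :
    ∃ c' : ι → ℝ, (∀ i, 0 ≤ c' i) ∧ 0 < c' i0 ∧ support c' ⊂ support c ∧
      ∑ i, c' i • y i = ∑ i, c i • y i := by
  obtain ⟨μ, hμc, hμ0, hμi0, hpos⟩ := exists_signed_dependence hL hdep i0
  -- move from `c` along `-μ` until the first coordinate with `0 < μ j` vanishes
  obtain ⟨j, hj, hjmin⟩ := Set.exists_min_image {i | 0 < μ i} (fun i => c i / μ i)
    (Set.toFinite _) hpos
  have hj : 0 < μ j := hj
  have hjc : j ∈ support c := hμc hj.ne'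
  set τ := c j / μ j
  have hτ : 0 ≤ τ := div_nonneg (hc j) hj.le
  refine ⟨fun i => c i - τ * μ i, fun i => ?_, ?_, ?_, ?_⟩
  · rcases lt_or_ge 0 (μ i) with hμ | hμ
    · exact sub_nonneg.2 ((le_div_iff₀ hμ).1 (hjmin i hμ))
    · nlinarith [hc i]
  · nlinarith
  · have hsub : support (fun i => c i - τ * μ i) ⊆ support c := fun i hi hci => by
      have hμi : μ i = 0 := by_contra fun h => hμc h hci
      simp [hci, hμi] at hi
    refine (Set.ssubset_iff_of_subset hsub).2 ⟨j, hjc, ?_⟩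
    simp [τ, div_mul_cancel₀ _ hj.ne']
  · simp only [sub_smul, sum_sub_distrib, mul_smul, ← smul_sum, hμ0, smul_zero, sub_zero]

/-- Conic Carathéodory theorem, keeping a prescribed index in the support. -/
theorem exists_linearIndepOn_support {c : ι → ℝ} (hc : ∀ i, 0 ≤ c i)
    (hL : ∀ i ∈ support c, 0 < L (y i)) {i0 : ι} (hi0 : 0 < c i0) :
    ∃ c' : ι → ℝ, (∀ i, 0 ≤ c' i) ∧ 0 < c' i0 ∧ support c' ⊆ support c ∧
      LinearIndepOn ℝ y (support c') ∧ ∑ i, c' i • y i = ∑ i, c i • y i := by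
  obtain ⟨c', ⟨hc'0, hc'i0, hc'c, hc'sum⟩, hmin⟩ :=
    (measure fun c' : ι → ℝ => (support c').ncard).wf.has_min
      {c' | (∀ i, 0 ≤ c' i) ∧ 0 < c' i0 ∧ support c' ⊆ support c ∧
        ∑ i, c' i • y i = ∑ i, c i • y i}
      ⟨c, hc, hi0, subset_rfl, rfl⟩
  refine ⟨c', hc'0, hc'i0, hc'c, by_contra fun hdep => ?_, hc'sum⟩
  obtain ⟨c'', hc''0, hc''i0, hss, hsum⟩ :=
    exists_support_ssubset_of_not_linearIndepOn hc'0 (fun i hi => hL i (hc'c hi)) hc'i0 hdep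
  exact hmin c'' ⟨hc''0, hc''i0, hss.subset.trans hc'c, hsum.trans hc'sum⟩
    (Set.ncard_lt_ncard hss (Set.toFinite _))

end ConicCaratheodory

section Correlation

variable {𝒰 : Type} {p : Ω → ℝ}

lemma marg_nonneg {𝒳 : Type} (hp : ∀ ω, 0 ≤ p ω) (X : Ω → 𝒳) (x : 𝒳) : 0 ≤ marg p X x :=
  Finset.sum_nonneg fun ω _ => by split_ifs <;> simp [hp ω]

lemma sum_marg {𝒳 : Type} [Fintype 𝒳] (p : Ω → ℝ) (X : Ω → 𝒳) :
    ∑ x, marg p X x = ∑ ω, p ω := by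
  simp only [marg]
  rw [Finset.sum_comm]
  simp

lemma cvar_nonneg (hp : ∀ ω, 0 ≤ p ω) (U : Ω → 𝒰) (f : Ω → ℝ) : 0 ≤ cvar p U f :=
  Finset.sum_nonneg fun ω _ => mul_nonneg (hp ω) (mul_self_nonneg _)

lemma ccov_le_sqrt_mul_sqrt (hp : ∀ ω, 0 ≤ p ω) (U : Ω → 𝒰) (f g : Ω → ℝ) :
    ccov p U f g ≤ √(cvar p U f) * √(cvar p U g) := by
  set A := fun ω => f ω - cexp p U (U ω) f
  set B := fun ω => g ω - cexp p U (U ω) g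
  have hweight : ∀ C D : Ω → ℝ,
      ∑ ω, √(p ω) * C ω * (√(p ω) * D ω) = ∑ ω, p ω * (C ω * D ω) := fun C D =>
    Finset.sum_congr rfl fun ω _ => by rw [mul_mul_mul_comm, Real.mul_self_sqrt (hp ω)]
  have key := Real.sum_mul_le_sqrt_mul_sqrt Finset.univ
    (fun ω => √(p ω) * A ω) (fun ω => √(p ω) * B ω)
  simp only [sq, hweight] at key
  exact key

lemma sqrt_cvar_mul_sqrt_cvar (hp : ∀ ω, 0 ≤ p ω) (U : Ω → 𝒰) (f g : Ω → ℝ) :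
    √(cvar p U f) * √(cvar p U g) = √(cvar p U f * cvar p U g) :=
  (Real.sqrt_mul (cvar_nonneg hp U f) _).symm

lemma ccov_le_of_ccorr_le (hp : ∀ ω, 0 ≤ p ω) (U : Ω → 𝒰) {f g : Ω → ℝ} {M : ℝ}
    (h : ccorr p U f g ≤ M) : ccov p U f g ≤ M * (√(cvar p U f) * √(cvar p U g)) := by
  unfold ccorr at h
  split_ifs at h with hpos
  · rwa [← div_le_iff₀ (by rw [sqrt_cvar_mul_sqrt_cvar hp]; exact Real.sqrt_pos.2 hpos)]
  · have h0 : √(cvar p U f) * √(cvar p U g) = 0 := by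
      rw [sqrt_cvar_mul_sqrt_cvar hp]
      exact Real.sqrt_eq_zero'.2 (not_lt.1 hpos)
    simpa [h0] using ccov_le_sqrt_mul_sqrt hp U f g

lemma ccorr_le_of_ccov_le (hp : ∀ ω, 0 ≤ p ω) (U : Ω → 𝒰) {f g : Ω → ℝ} {M : ℝ} (hM : 0 ≤ M)
    (h : ccov p U f g ≤ M * (√(cvar p U f) * √(cvar p U g))) : ccorr p U f g ≤ M := by
  unfold ccorr
  split_ifs with hpos
  · rwa [div_le_iff₀ (by rw [sqrt_cvar_mul_sqrt_cvar hp]; exact Real.sqrt_pos.2 hpos)]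
  · exact hM

lemma ccorr_le_maxCorr {𝒳 𝒴 : Type} (hp : ∀ ω, 0 ≤ p ω) (U : Ω → 𝒰) (X : Ω → 𝒳)
    (Y : Ω → 𝒴) (f : 𝒳 × 𝒰 → ℝ) (g : 𝒴 × 𝒰 → ℝ) :
    ccorr p U (fun ω => f (X ω, U ω)) (fun ω => g (Y ω, U ω)) ≤ maxCorr p U X Y := by
  have hle_one : ∀ f' g', ccorr p U f' g' ≤ 1 := fun f' g' =>
    ccorr_le_of_ccov_le hp U zero_le_one (by simpa using ccov_le_sqrt_mul_sqrt hp U f' g')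
  have hg : ccorr p U (fun ω => f (X ω, U ω)) (fun ω => g (Y ω, U ω)) ≤
      ⨆ g' : 𝒴 × 𝒰 → ℝ, ccorr p U (fun ω => f (X ω, U ω)) fun ω => g' (Y ω, U ω) :=
    le_ciSup (f := fun g' : 𝒴 × 𝒰 → ℝ => ccorr p U (fun ω => f (X ω, U ω)) fun ω => g' (Y ω, U ω))
      ⟨1, Set.forall_mem_range.2 fun g' => hle_one _ _⟩ g
  have hbdd : BddAbove (Set.range fun f' : 𝒳 × 𝒰 → ℝ =>
      ⨆ g' : 𝒴 × 𝒰 → ℝ, ccorr p U (fun ω => f' (X ω, U ω)) fun ω => g' (Y ω, U ω)) :=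
    ⟨1, Set.forall_mem_range.2 fun f' => ciSup_le fun g' => hle_one _ _⟩
  exact hg.trans (le_ciSup hbdd f)

lemma maxCorr_le {𝒳 𝒴 : Type} {U : Ω → 𝒰} {X : Ω → 𝒳} {Y : Ω → 𝒴} {M : ℝ}
    (h : ∀ (f : 𝒳 × 𝒰 → ℝ) (g : 𝒴 × 𝒰 → ℝ),
      ccorr p U (fun ω => f (X ω, U ω)) (fun ω => g (Y ω, U ω)) ≤ M) :
    maxCorr p U X Y ≤ M :=
  ciSup_le fun f => ciSup_le fun g => h f g

lemma maxCorr_nonneg {𝒳 𝒴 : Type} (hp : ∀ ω, 0 ≤ p ω) (U : Ω → 𝒰) (X : Ω → 𝒳)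
    (Y : Ω → 𝒴) : 0 ≤ maxCorr p U X Y :=
  le_of_eq_of_le (by simp [ccorr, cvar, ccov, expec, cexp])
    (ccorr_le_maxCorr hp U X Y 0 0)

end Correlation

section Slices

open Finset

variable {α 𝒰 : Type} [Fintype α] [Fintype 𝒰] {q : α × 𝒰 → ℝ}

-- On a null slice this is `0`, by the convention `x / 0 = 0`.
def condPMF (q : α × 𝒰 → ℝ) (u : 𝒰) (a : α) : ℝ := q (a, u) / marg q Prod.snd u

def slices (q : α × 𝒰 → ℝ) : Set (α → ℝ) := condPMF q '' {u | marg q Prod.snd u ≠ 0}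

lemma marg_snd_apply (q : α × 𝒰 → ℝ) (u : 𝒰) : marg q Prod.snd u = ∑ a, q (a, u) := by
  simp [marg, Fintype.sum_prod_type]

lemma marg_fst_apply (q : α × 𝒰 → ℝ) (a : α) : marg q Prod.fst a = ∑ u, q (a, u) := by
  simp only [marg, Fintype.sum_prod_type]
  rw [sum_eq_single a (fun b _ hb => by simp [hb]) (by simp)]
  simp

lemma marg_snd_mul_condPMF (hq : ∀ z, 0 ≤ q z) (u : 𝒰) (a : α) :
    marg q Prod.snd u * condPMF q u a = q (a, u) := by
  by_cases hu : marg q Prod.snd u = 0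
  · rw [hu, zero_mul, eq_comm]
    rw [marg_snd_apply] at hu
    exact (sum_eq_zero_iff_of_nonneg fun b _ => hq (b, u)).1 hu a (mem_univ a)
  · exact mul_div_cancel₀ _ hu

lemma condPMF_nonneg (hq : ∀ z, 0 ≤ q z) (u : 𝒰) (a : α) : 0 ≤ condPMF q u a :=
  div_nonneg (hq _) (marg_nonneg hq _ _)

lemma sum_condPMF {u : 𝒰} (hu : marg q Prod.snd u ≠ 0) : ∑ a, condPMF q u a = 1 := by
  simp only [condPMF]
  rw [← sum_div, ← marg_snd_apply, div_self hu]

lemma slices_nonempty (hq : IsPMF q) : (slices q).Nonempty := by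
  obtain ⟨u, -, hu⟩ := exists_ne_zero_of_sum_ne_zero
    (by rw [sum_marg, hq.2]; exact one_ne_zero : ∑ u, marg q Prod.snd u ≠ 0)
  exact ⟨_, u, hu, rfl⟩

lemma cexp_snd (q : α × 𝒰 → ℝ) (u : 𝒰) (F : α × 𝒰 → ℝ) :
    cexp q Prod.snd u F = expec (condPMF q u) fun a => F (a, u) := by
  simp [cexp, expec, condPMF, Fintype.sum_prod_type, sum_div, div_mul_eq_mul_div]

lemma cexp_const_unit {r : α → ℝ} (hr : ∑ a, r a = 1) (φ : α → ℝ) :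
    cexp r (fun _ => ()) () φ = expec r φ := by
  simp [cexp, expec, marg, hr]

lemma ccov_snd_eq_sum (hq : ∀ z, 0 ≤ q z) (F G : α × 𝒰 → ℝ) :
    ccov q Prod.snd F G = ∑ u, marg q Prod.snd u *
      ccov (condPMF q u) (fun _ => ()) (fun a => F (a, u)) (fun a => G (a, u)) := by
  simp only [ccov, expec]
  rw [Fintype.sum_prod_type_right]
  refine sum_congr rfl fun u _ => ?_
  by_cases hu : marg q Prod.snd u = 0
  · simp [← marg_snd_mul_condPMF hq u, hu]
  · rw [mul_sum]
    refine sum_congr rfl fun a _ => ?_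
    rw [← marg_snd_mul_condPMF hq u a, cexp_snd, cexp_snd, cexp_const_unit (sum_condPMF hu),
      cexp_const_unit (sum_condPMF hu)]
    ring

lemma ccov_snd_eq_of_eq_zero_off (hq : ∀ z, 0 ≤ q z) {u : 𝒰} {F : α × 𝒰 → ℝ}
    (hF : ∀ a v, v ≠ u → F (a, v) = 0) (G : α × 𝒰 → ℝ) :
    ccov q Prod.snd F G = marg q Prod.snd u *
      ccov (condPMF q u) (fun _ => ()) (fun a => F (a, u)) (fun a => G (a, u)) := by
  rw [ccov_snd_eq_sum hq, sum_eq_single u (fun v _ hv => ?_) (by simp)]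
  simp [ccov, expec, cexp, hF _ v hv]

end Slices

section SliceCorrelation

variable {𝒳 𝒴 𝒰 : Type} [Fintype 𝒳] [Fintype 𝒴] [Fintype 𝒰] {q : (𝒳 × 𝒴) × 𝒰 → ℝ}

lemma maxCorr_le_of_forall_condPMF (hq : ∀ z, 0 ≤ q z) {M : ℝ} (hM : 0 ≤ M)
    (h : ∀ u, marg q Prod.snd u ≠ 0 → maxCorr0 (condPMF q u) Prod.fst Prod.snd ≤ M) :
    maxCorr q Prod.snd (fun z => z.1.1) (fun z => z.1.2) ≤ M := by
  refine maxCorr_le fun f g => ccorr_le_of_ccov_le hq _ hM ?_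
  set w := marg q Prod.snd
  set vf := fun u => cvar (condPMF q u) (fun _ => ()) fun a => f (a.1, u)
  set vg := fun u => cvar (condPMF q u) (fun _ => ()) fun a => g (a.2, u)
  have hslice : ∀ u, w u * ccov (condPMF q u) (fun _ => ()) (fun a => f (a.1, u))
      (fun a => g (a.2, u)) ≤ M * (√(w u * vf u) * √(w u * vg u)) := fun u => by
    by_cases hu : w u = 0
    · simp [hu]
    have hw := marg_nonneg hq Prod.snd u
    rw [Real.sqrt_mul hw, Real.sqrt_mul hw, mul_mul_mul_comm, Real.mul_self_sqrt hw,
      mul_left_comm]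
    refine mul_le_mul_of_nonneg_left (ccov_le_of_ccorr_le (condPMF_nonneg hq u) _ ?_) hw
    exact (ccorr_le_maxCorr (condPMF_nonneg hq u) _ Prod.fst Prod.snd (fun z => f (z.1, u))
      (fun z => g (z.1, u))).trans (h u hu)
  have hvar : ∀ F : (𝒳 × 𝒴) × 𝒰 → ℝ, cvar q Prod.snd F =
      ∑ u, w u * cvar (condPMF q u) (fun _ => ()) fun a => F (a, u) :=
    fun F => ccov_snd_eq_sum hq F F
  have hnonneg : ∀ (φ : 𝒰 → 𝒳 × 𝒴 → ℝ) u, 0 ≤ w u * cvar (condPMF q u) (fun _ => ()) (φ u) :=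
    fun φ u => mul_nonneg (marg_nonneg hq _ u) (cvar_nonneg (condPMF_nonneg hq u) _ _)
  calc ccov q Prod.snd (fun z => f (z.1.1, z.2)) (fun z => g (z.1.2, z.2))
      = ∑ u, w u * ccov (condPMF q u) (fun _ => ()) (fun a => f (a.1, u))
          (fun a => g (a.2, u)) := ccov_snd_eq_sum hq _ _
    _ ≤ ∑ u, M * (√(w u * vf u) * √(w u * vg u)) := Finset.sum_le_sum fun u _ => hslice u
    _ = M * ∑ u, √(w u * vf u) * √(w u * vg u) := (Finset.mul_sum _ _ _).symm
    _ ≤ M * (√(∑ u, w u * vf u) * √(∑ u, w u * vg u)) :=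
        mul_le_mul_of_nonneg_left (Real.sum_sqrt_mul_sqrt_le _
          (hnonneg fun u a => f (a.1, u)) (hnonneg fun u a => g (a.2, u))) hM
    _ = M * (√(cvar q Prod.snd fun z => f (z.1.1, z.2)) *
          √(cvar q Prod.snd fun z => g (z.1.2, z.2))) := by rw [hvar, hvar]

lemma maxCorr0_condPMF_le_maxCorr (hq : ∀ z, 0 ≤ q z) {u : 𝒰} (hu : marg q Prod.snd u ≠ 0) :
    maxCorr0 (condPMF q u) Prod.fst Prod.snd ≤
      maxCorr q Prod.snd (fun z => z.1.1) (fun z => z.1.2) := by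
  have hw : 0 < marg q Prod.snd u := (marg_nonneg hq _ u).lt_of_ne' hu
  refine maxCorr_le fun f g => ccorr_le_of_ccov_le (condPMF_nonneg hq u) _
    (maxCorr_nonneg hq _ _ _) ?_
  -- extend `f` and `g` by zero off the slice `u`
  have key := ccov_le_of_ccorr_le hq _ (ccorr_le_maxCorr hq Prod.snd (fun z => z.1.1)
    (fun z => z.1.2) (fun z => if z.2 = u then f (z.1, ()) else 0)
    (fun z => if z.2 = u then g (z.1, ()) else 0))
  simp only [cvar] at key ⊢
  rw [ccov_snd_eq_of_eq_zero_off hq (fun a v hv => if_neg hv), ccov_snd_eq_of_eq_zero_off hq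
    (fun a v hv => if_neg hv), ccov_snd_eq_of_eq_zero_off hq (fun a v hv => if_neg hv),
    Real.sqrt_mul hw.le, Real.sqrt_mul hw.le, mul_mul_mul_comm, Real.mul_self_sqrt hw.le,
    mul_left_comm] at key
  simpa using le_of_mul_le_mul_left key hw

lemma maxCorr_eq_of_isGreatest (hq : ∀ z, 0 ≤ q z) {M : ℝ}
    (hM : IsGreatest ((fun r => maxCorr0 r Prod.fst Prod.snd) '' slices q) M) :
    maxCorr q Prod.snd (fun z => z.1.1) (fun z => z.1.2) = M := by
  obtain ⟨_, ⟨u, hu, rfl⟩, rfl⟩ := hM.1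
  exact le_antisymm
    (maxCorr_le_of_forall_condPMF hq (maxCorr_nonneg (condPMF_nonneg hq u) _ _ _)
      fun v hv => hM.2 ⟨_, ⟨v, hv, rfl⟩, rfl⟩)
    (maxCorr0_condPMF_le_maxCorr hq hu)

end SliceCorrelation

section Entropy

open Finset

variable {α 𝒰 : Type} [Fintype α] [Fintype 𝒰] {q : α × 𝒰 → ℝ}

lemma ent_congr {𝒳 Ω' : Type} [Fintype 𝒳] [Fintype Ω'] {p : Ω → ℝ} {p' : Ω' → ℝ}
    {X : Ω → 𝒳} {X' : Ω' → 𝒳} (h : ∀ x, marg p X x = marg p' X' x) : ent p X = ent p' X' := by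
  simp only [ent, h]

lemma neg_mul_logb_mul (x y : ℝ) :
    -(x * y * Real.logb 2 (x * y)) = y * -(x * Real.logb 2 x) + x * -(y * Real.logb 2 y) := by
  have h := Real.negMulLog_mul x y
  simp only [Real.negMulLog, Real.logb] at h ⊢
  field_simp
  linear_combination h

lemma ent_id (r : α → ℝ) : ent r id = ∑ a, -(r a * Real.logb 2 (r a)) := by
  simp [ent, marg]

lemma mutInfo_fst_snd_eq (hq : ∀ z, 0 ≤ q z) :
    mutInfo q Prod.fst Prod.snd =
      ent q Prod.fst - ∑ u, marg q Prod.snd u * ent (condPMF q u) id := by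
  have hjoint : ent q (fun z => (z.1, z.2)) = ∑ u, ∑ a, -(q (a, u) * Real.logb 2 (q (a, u))) := by
    simp [ent, marg, Fintype.sum_prod_type_right]
  have hslice : ∀ u, ∑ a, -(q (a, u) * Real.logb 2 (q (a, u))) =
      -(marg q Prod.snd u * Real.logb 2 (marg q Prod.snd u)) +
        marg q Prod.snd u * ent (condPMF q u) id := fun u => by
    simp only [← marg_snd_mul_condPMF hq u, neg_mul_logb_mul, sum_add_distrib, ← sum_mul,
      ← mul_sum, ent_id]
    by_cases hu : marg q Prod.snd u = 0
    · simp [hu]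
    · rw [sum_condPMF hu, one_mul]
  have hsnd : ent q Prod.snd = ∑ u, -(marg q Prod.snd u * Real.logb 2 (marg q Prod.snd u)) := rfl
  rw [mutInfo, hjoint, hsnd, sum_congr rfl fun u _ => hslice u, sum_add_distrib]
  ring

end Entropy

section Reduction

open Finset Function

variable {α 𝒰 : Type} [Fintype α] [Fintype 𝒰] {q : α × 𝒰 → ℝ}

lemma sum_subtype_support_mul {c : 𝒰 → ℝ} (F : 𝒰 → ℝ) :
    ∑ u : support c, c u * F u = ∑ u, c u * F u := by
  rw [Finset.sum_set_coe (f := fun u => c u * F u)]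
  exact sum_subset (subset_univ _) fun u _ hu => by simp_all

theorem exists_small_auxiliary (hq : IsPMF q) {i0 : 𝒰} (hi0 : marg q Prod.snd i0 ≠ 0) :
    ∃ (𝒰' : FinAlph) (q' : α × 𝒰' → ℝ), Fintype.card 𝒰' ≤ Fintype.card α + 1 ∧ IsPMF q' ∧
      (∀ a, marg q' Prod.fst a = marg q Prod.fst a) ∧
      mutInfo q' Prod.fst Prod.snd = mutInfo q Prod.fst Prod.snd ∧
      slices q' ⊆ slices q ∧ condPMF q i0 ∈ slices q' := by
  -- by `mutInfo_fst_snd_eq`, the first marginal and `mutInfo` are affine in these vectors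
  let y : 𝒰 → (α → ℝ) × ℝ := fun u => (condPMF q u, ent (condPMF q u) id)
  let L : (α → ℝ) × ℝ →ₗ[ℝ] ℝ := (∑ a, LinearMap.proj a) ∘ₗ LinearMap.fst ℝ (α → ℝ) ℝ
  obtain ⟨c, hc0, hci0, hcw, hind, hsum⟩ := exists_linearIndepOn_support (y := y) (L := L)
    (marg_nonneg hq.1 Prod.snd) (fun u hu => by simp [L, y, sum_condPMF hu])
    ((marg_nonneg hq.1 _ i0).lt_of_ne' hi0)
  have hfst : ∀ a, ∑ u, c u * condPMF q u a = marg q Prod.fst a := fun a => by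
    have := congrArg (fun z => z.1 a) hsum
    simp only [Prod.fst_sum, Prod.smul_fst, Finset.sum_apply, Pi.smul_apply, smul_eq_mul, y,
      marg_snd_mul_condPMF hq.1] at this
    rw [this, marg_fst_apply]
  have hsnd : ∑ u, c u * ent (condPMF q u) id =
      ∑ u, marg q Prod.snd u * ent (condPMF q u) id := by
    simpa only [Prod.snd_sum, Prod.smul_snd, smul_eq_mul] using congrArg Prod.snd hsum
  let q' : α × support c → ℝ := fun z => c z.2 * condPMF q z.2 z.1
  have hq'0 : ∀ z, 0 ≤ q' z := fun z => mul_nonneg (hc0 _) (condPMF_nonneg hq.1 _ _)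
  have hw' : ∀ u, marg q' Prod.snd u = c u := fun u => by
    rw [marg_snd_apply, ← mul_one (c u), ← sum_condPMF (hcw u.2), mul_sum]
  have hcond' : ∀ u, condPMF q' u = condPMF q u := fun u => funext fun a => by
    simp only [condPMF, hw']
    exact mul_div_cancel_left₀ _ u.2
  have hmarg' : ∀ a, marg q' Prod.fst a = marg q Prod.fst a := fun a => by
    rw [marg_fst_apply, ← hfst, ← sum_subtype_support_mul (c := c)]
  refine ⟨⟨support c⟩, q', ?_, ⟨hq'0, ?_⟩, hmarg', ?_, ?_, ?_⟩
  · simpa using hind.fintype_card_le_finrank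
  · rw [← sum_marg q' Prod.fst, sum_congr rfl fun a _ => hmarg' a, sum_marg, hq.2]
  · have hslices : ∑ u : support c, marg q' Prod.snd u * ent (condPMF q' u) id =
        ∑ u, c u * ent (condPMF q u) id := by
      simp only [hw', hcond']
      exact sum_subtype_support_mul fun u => ent (condPMF q u) id
    rw [mutInfo_fst_snd_eq (q := q') hq'0, mutInfo_fst_snd_eq hq.1, ent_congr hmarg', hslices, hsnd]
  · rintro _ ⟨u, hu, rfl⟩
    exact ⟨u, hcw u.2, (hcond' u).symm⟩
  · exact ⟨⟨i0, hci0.ne'⟩, by simpa [hw'] using hci0.ne', hcond' _⟩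

end Reduction

theorem Cbeta_cardinality_bound_general {𝒳 𝒴 : Type} [Fintype 𝒳] [Fintype 𝒴]
    (p : 𝒳 × 𝒴 → ℝ)
    (𝒰 : Type) [Fintype 𝒰] (q : (𝒳 × 𝒴) × 𝒰 → ℝ) (hq : IsPMF q)
    (hmarg : ∀ a, marg q Prod.fst a = p a) :
    ∃ (𝒰' : FinAlph) (q' : (𝒳 × 𝒴) × 𝒰' → ℝ),
      Fintype.card 𝒰' ≤ Fintype.card 𝒳 * Fintype.card 𝒴 + 1 ∧
      IsPMF q' ∧ (∀ a, marg q' Prod.fst a = p a) ∧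
      maxCorr q' Prod.snd (fun a => a.1.1) (fun a => a.1.2) =
        maxCorr q Prod.snd (fun a => a.1.1) (fun a => a.1.2) ∧
      mutInfo q' Prod.fst Prod.snd = mutInfo q Prod.fst Prod.snd := by
  set ρ := fun r : 𝒳 × 𝒴 → ℝ => maxCorr0 r Prod.fst Prod.snd
  obtain ⟨_, ⟨i0, hi0, rfl⟩, hmax⟩ := Set.exists_max_image (slices q) ρ
    ((Set.toFinite _).image _) (slices_nonempty hq)
  obtain ⟨𝒰', q', hcard, hq', hmarg', hmi, hsub, hi0'⟩ := exists_small_auxiliary hq hi0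
  have hM : IsGreatest (ρ '' slices q) (ρ (condPMF q i0)) :=
    ⟨Set.mem_image_of_mem _ ⟨i0, hi0, rfl⟩, Set.forall_mem_image.2 hmax⟩
  have hM' : IsGreatest (ρ '' slices q') (ρ (condPMF q i0)) :=
    ⟨Set.mem_image_of_mem _ hi0', upperBounds_mono_set (Set.image_mono hsub) hM.2⟩
  refine ⟨𝒰', q', by rwa [Fintype.card_prod] at hcard, hq', fun a => (hmarg' a).trans (hmarg a),
    ?_, hmi⟩
  rw [maxCorr_eq_of_isGreatest hq'.1 hM', maxCorr_eq_of_isGreatest hq.1 hM]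

/-- Cardinality bound for `C_β`. For every finite-alphabet auxiliary `U`
jointly distributed with `(X,Y)` satisfying `ρ_m(X;Y|U) ≤ β`, there is an auxiliary `U'`
on an alphabet of size at most `|𝒳|·|𝒴| + 1` with the same joint `(X,Y)`-marginal, the
same conditional maximal correlation, and the same mutual information; hence the infimum
defining `C_β(X;Y)` may be restricted to alphabets of size at most `|𝒳|·|𝒴| + 1`. -/
theorem Cbeta_cardinality_bound {𝒳 𝒴 : Type} [Fintype 𝒳] [Fintype 𝒴]
    (p : 𝒳 × 𝒴 → ℝ) (hp : IsPMF p) (β : ℝ) (hβ0 : 0 ≤ β) (hβ1 : β ≤ 1)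
    (𝒰 : Type) [Fintype 𝒰] (q : (𝒳 × 𝒴) × 𝒰 → ℝ) (hq : IsPMF q)
    (hmarg : ∀ a, marg q Prod.fst a = p a)
    (hcorr : maxCorr q Prod.snd (fun a => a.1.1) (fun a => a.1.2) ≤ β) :
    ∃ (𝒰' : FinAlph) (q' : (𝒳 × 𝒴) × 𝒰' → ℝ),
      Fintype.card 𝒰' ≤ Fintype.card 𝒳 * Fintype.card 𝒴 + 1 ∧
      IsPMF q' ∧ (∀ a, marg q' Prod.fst a = p a) ∧
      maxCorr q' Prod.snd (fun a => a.1.1) (fun a => a.1.2) =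
        maxCorr q Prod.snd (fun a => a.1.1) (fun a => a.1.2) ∧
      mutInfo q' Prod.fst Prod.snd = mutInfo q Prod.fst Prod.snd :=
  Cbeta_cardinality_bound_general p 𝒰 q hq hmarg

end GCI
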